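/- arXiv:1908.03795 — 9 statements merged into one kernel-verified Lean document; each statement's English description precedes it below -/
import Mathlib

section
/- Let A be an n×n Hermitian matrix with eigenvalues λ₁(A),…,λₙ(A) and an orthonormal basis of eigenvectors v₁,…,vₙ. For 1 ≤ j ≤ n let M_j be the (n−1)×(n−1) minor of A obtained by deleting the j-th row and column, with eigenvalues λ₁(M_j),…,λ_{n−1}(M_j). Then for all i, j: |v_{i,j}|² · ∏_{k≠i} (λ_i(A) − λ_k(A)) = ∏_{k=1}^{n−1} (λ_i(A) − λ_k(M_j)), where v_{i,j} denotes the j-th component of v_i. -/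
/-!
Evaluate the diagonal entry `(j, j)` of `adj (λᵢ(A) I - A)` in two ways. Cofactor expansion gives
`det (λᵢ(A) I - M_j)`, the characteristic polynomial of `M_j` at `λᵢ(A)`. On the other hand
`A = U D U*` with `U` the unitary matrix whose columns are the `vₖ`, so
`adj (λᵢ(A) I - A) = U adj (λᵢ(A) I - D) U*`; the adjugate of the diagonal matrix `λᵢ(A) I - D`
is diagonal with entries `∏_{k ≠ l} (λᵢ(A) - λₖ(A))`, all of which vanish except the one at `l = i`,
so the `(j, j)` entry is `|v_{i,j}|² ∏_{k ≠ i} (λᵢ(A) - λₖ(A))`.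
-/

open Finset

namespace Matrix

variable {m R : Type*} [Fintype m] [DecidableEq m] [CommRing R]

theorem adjugate_eq_det_smul_of_mul_eq_one {M N : Matrix m m R} (h : M * N = 1) :
    adjugate M = M.det • N := by
  calc adjugate M = adjugate M * (M * N) := by rw [h, Matrix.mul_one]
    _ = M.det • N := by rw [← Matrix.mul_assoc, adjugate_mul, smul_mul, Matrix.one_mul]

theorem adjugate_mul_mul_of_mul_eq_one {U V : Matrix m m R} (h : U * V = 1) (B : Matrix m m R) :
    adjugate (U * B * V) = U * adjugate B * V := by
  have h' : V * U = 1 := mul_eq_one_comm.mp h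
  rw [adjugate_mul_distrib, adjugate_mul_distrib, adjugate_eq_det_smul_of_mul_eq_one h,
    adjugate_eq_det_smul_of_mul_eq_one h', smul_mul, Matrix.mul_smul, Matrix.mul_smul, smul_smul,
    ← det_mul, h', det_one, one_smul, Matrix.mul_assoc]

theorem adjugate_scalar_sub_apply_self {n : ℕ} (A : Matrix (Fin (n + 1)) (Fin (n + 1)) R)
    (c : R) (j : Fin (n + 1)) :
    adjugate (scalar _ c - A) j j = (A.submatrix j.succAbove j.succAbove).charpoly.eval c := by
  rw [adjugate_fin_succ_eq_det_submatrix, Even.neg_one_pow ⟨j, rfl⟩, one_mul, eval_charpoly,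
    submatrix_sub, Pi.sub_apply, Pi.sub_apply, scalar_apply, scalar_apply,
    submatrix_diagonal _ _ Fin.succAbove_right_injective]
  rfl

theorem mul_eq_mul_diagonal_of_mulVec_eq_smul {A : Matrix m m R} {v : m → m → R} {d : m → R}
    (h : ∀ i, A *ᵥ v i = d i • v i) :
    A * (of v)ᵀ = (of v)ᵀ * diagonal d := by
  ext a b
  rw [mul_diagonal]
  simpa [mul_apply, mulVec, dotProduct, mul_comm] using congrFun (h b) a

section StarRing

variable [StarRing R]

theorem transpose_of_mem_unitaryGroup {v : m → m → R}
    (h : ∀ i k, star (v i) ⬝ᵥ v k = if i = k then 1 else 0) :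
    (of v)ᵀ ∈ unitaryGroup m R := by
  rw [mem_unitaryGroup_iff']
  ext a b
  simpa [mul_apply, dotProduct, one_apply] using h a b

theorem eq_mul_mul_star_of_mul_eq {A D U : Matrix m m R} (hU : U ∈ unitaryGroup m R)
    (h : A * U = U * D) :
    A = U * D * star U := by
  rw [← h, Matrix.mul_assoc, mem_unitaryGroup_iff.mp hU, Matrix.mul_one]

theorem adjugate_scalar_sub_mul_diagonal_mul_star_apply {U : Matrix m m R}
    (hU : U ∈ unitaryGroup m R) (d : m → R) (i j : m) :
    adjugate (scalar m (d i) - U * diagonal d * star U) j j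
      = U j i * star (U j i) * ∏ k ∈ univ.erase i, (d i - d k) := by
  have hsplit : scalar m (d i) - U * diagonal d * star U
      = U * diagonal (fun k => d i - d k) * star U := by
    rw [← diagonal_sub, Matrix.mul_sub, Matrix.sub_mul, ← scalar_apply,
      ← (scalar_commute (d i) (fun _ => Commute.all _ _) U).eq, Matrix.mul_assoc (scalar m _),
      mem_unitaryGroup_iff.mp hU, Matrix.mul_one]
  rw [hsplit, adjugate_mul_mul_of_mul_eq_one (mem_unitaryGroup_iff.mp hU), adjugate_diagonal,
    mul_apply, sum_eq_single i]
  · simp [mul_diagonal, mul_right_comm]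
  · intro l _ hl
    rw [mul_diagonal, prod_eq_zero (mem_erase.mpr ⟨Ne.symm hl, mem_univ i⟩) (sub_self _),
      mul_zero, zero_mul]
  · simp

end StarRing

end Matrix

open Matrix

open Polynomial in
theorem eigenvector_eigenvalue_identity_general {n : ℕ}
    (A : Matrix (Fin (n+1)) (Fin (n+1)) ℂ)
    (lam : Fin (n+1) → ℝ) (v : Fin (n+1) → Fin (n+1) → ℂ)
    (horth : ∀ i k, dotProduct (star (v i)) (v k) = if i = k then 1 else 0)
    (heig : ∀ i, A.mulVec (v i) = (lam i : ℂ) • v i)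
    (mu : Fin (n+1) → Fin n → ℝ)
    (hmu : ∀ j : Fin (n+1), (A.submatrix j.succAbove j.succAbove).charpoly
        = ∏ k, (X - C (mu j k : ℂ)))
    (i j : Fin (n+1)) :
    ‖v i j‖ ^ 2 * ∏ k ∈ Finset.univ.erase i, (lam i - lam k)
      = ∏ k, (lam i - mu j k) := by
  have hU := transpose_of_mem_unitaryGroup horth
  have hdecomp := eq_mul_mul_star_of_mul_eq hU (mul_eq_mul_diagonal_of_mulVec_eq_smul heig)
  have hnorm : (of v)ᵀ j i * star ((of v)ᵀ j i) = ((‖v i j‖ ^ 2 : ℝ) : ℂ) := by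
    simp [Complex.mul_conj, Complex.normSq_eq_norm_sq]
  have hadj := adjugate_scalar_sub_mul_diagonal_mul_star_apply hU (fun k => (lam k : ℂ)) i j
  rw [← hdecomp, adjugate_scalar_sub_apply_self, hmu j, hnorm] at hadj
  apply Complex.ofReal_injective
  push_cast
  simpa [eval_prod] using hadj.symm

open Polynomial in
/-- The eigenvector-eigenvalue identity. -/
theorem eigenvector_eigenvalue_identity {n : ℕ}
    (A : Matrix (Fin (n+1)) (Fin (n+1)) ℂ) (hA : A.IsHermitian)
    (lam : Fin (n+1) → ℝ) (v : Fin (n+1) → Fin (n+1) → ℂ)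
    (horth : ∀ i k, dotProduct (star (v i)) (v k) = if i = k then 1 else 0)
    (heig : ∀ i, A.mulVec (v i) = (lam i : ℂ) • v i)
    (mu : Fin (n+1) → Fin n → ℝ)
    (hmu : ∀ j : Fin (n+1), (A.submatrix j.succAbove j.succAbove).charpoly
        = ∏ k, (X - C (mu j k : ℂ)))
    (i j : Fin (n+1)) :
    ‖v i j‖ ^ 2 * ∏ k ∈ Finset.univ.erase i, (lam i - lam k)
      = ∏ k, (lam i - mu j k) :=
  eigenvector_eigenvalue_identity_general A lam v horth heig mu hmu i j
end

section
/- Let A be an n×n Hermitian matrix with eigenvalues λ₁(A),…,λₙ(A) and unit eigenvectors v₁,…,vₙ, and let M_j be the j-th principal minor. Then |v_{i,j}|² · p_A'(λ_i(A)) = p_{M_j}(λ_i(A)), where p_A and p_{M_j} are the characteristic polynomials of A and M_j. -/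
/-!
Let `U` be the unitary matrix whose columns are the `vₖ` and `D = diag λ`, so that `A = U D Uᴴ`.
Then `p_A = ∏ₘ (X - λₘ)`, hence `p_A'(λᵢ) = ∏_{m ≠ i} (λᵢ - λₘ)`. On the other side, `p_{M_j}(t)` is
the `(j, j)` cofactor of `t I - A`, i.e. `adj(t I - A)ⱼⱼ`, and `adj(t I - A) = U adj(t I - D) Uᴴ`.
At `t = λᵢ` the diagonal matrix `adj(λᵢ I - D)` has a single nonzero entry `∏_{m ≠ i} (λᵢ - λₘ)`,
in position `i`, so the `(j, j)` entry of the conjugate is `|v_{i,j}|²` times that product.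
-/

open Matrix Finset

theorem Polynomial.eval_derivative_prod_X_sub_C {R ι : Type*} [CommRing R] [DecidableEq ι]
    {s : Finset ι} (d : ι → R) {i : ι} (hi : i ∈ s) :
    (derivative (∏ m ∈ s, (X - C (d m)))).eval (d i) = ∏ m ∈ s.erase i, (d i - d m) := by
  rw [← Finset.mul_prod_erase s _ hi, derivative_mul]
  simp [eval_prod]

namespace Matrix

variable {n R : Type*} [Fintype n] [DecidableEq n] [CommRing R]

theorem adjugate_eq_det_smul_of_mul_eq_one_s1 {U V : Matrix n n R} (h : U * V = 1) :
    adjugate U = U.det • V := by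
  calc adjugate U = adjugate U * U * V := by rw [Matrix.mul_assoc, h, Matrix.mul_one]
    _ = U.det • V := by rw [adjugate_mul, Matrix.smul_mul, Matrix.one_mul]

theorem adjugate_conj_of_mul_eq_one {U V : Matrix n n R} (h : V * U = 1) (N : Matrix n n R) :
    adjugate (U * N * V) = U * adjugate N * V := by
  have h' : U * V = 1 := mul_eq_one_comm.mp h
  have hdet : U.det * V.det = 1 := by rw [← det_mul, h', det_one]
  rw [adjugate_mul_distrib, adjugate_mul_distrib, adjugate_eq_det_smul_of_mul_eq_one_s1 h,
    adjugate_eq_det_smul_of_mul_eq_one_s1 h']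
  simp only [Matrix.smul_mul, Matrix.mul_smul, smul_smul, Matrix.mul_assoc, hdet, one_smul]

theorem scalar_sub_conj_of_mul_eq_one {U V : Matrix n n R} (h : U * V = 1) (t : R)
    (N : Matrix n n R) : scalar n t - U * N * V = U * (scalar n t - N) * V := by
  rw [Matrix.mul_sub, Matrix.sub_mul, ← (scalar_commute t (fun _ => Commute.all _ _) U).eq,
    Matrix.mul_assoc (scalar n t), h, Matrix.mul_one]

theorem adjugate_diagonal_sub_self (d : n → R) (i : n) :
    adjugate (diagonal fun m => d i - d m) =
      diagonal (Pi.single i (∏ m ∈ univ.erase i, (d i - d m))) := by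
  rw [adjugate_diagonal]
  congr 1
  ext k
  rcases eq_or_ne k i with rfl | hk
  · simp
  · rw [Pi.single_eq_of_ne hk]
    exact prod_eq_zero (mem_erase.mpr ⟨Ne.symm hk, mem_univ i⟩) (sub_self _)

theorem mul_diagonal_single_mul_conjTranspose_apply [StarRing R] (U : Matrix n n R)
    (i j : n) (c : R) : (U * diagonal (Pi.single i c) * Uᴴ) j j = U j i * c * star (U j i) := by
  simp [mul_apply, diagonal_apply, Pi.single_apply]

theorem eval_charpoly_submatrix_succAbove {m : ℕ} (A : Matrix (Fin (m + 1)) (Fin (m + 1)) R)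
    (j : Fin (m + 1)) (t : R) :
    (A.submatrix j.succAbove j.succAbove).charpoly.eval t = adjugate (scalar _ t - A) j j := by
  rw [adjugate_fin_succ_eq_det_submatrix, Even.neg_one_pow ⟨j, rfl⟩, one_mul, eval_charpoly]
  congr 1
  ext a b
  simp [diagonal_apply]

theorem conjTranspose_mul_transpose_of_of_orthonormal [StarRing R] {v : n → n → R}
    (hv : ∀ i k, star (v i) ⬝ᵥ v k = if i = k then 1 else 0) :
    (of v)ᵀᴴ * (of v)ᵀ = 1 := by
  ext a b
  rw [mul_apply, one_apply, ← hv a b]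
  rfl

theorem mul_transpose_of_eq_of_mulVec_eq_smul {A : Matrix n n R} {v : n → n → R}
    {d : n → R} (hv : ∀ k, A *ᵥ v k = d k • v k) : A * (of v)ᵀ = (of v)ᵀ * diagonal d := by
  ext r k
  rw [mul_diagonal]
  simpa [mul_comm, mul_apply, mulVec, dotProduct] using congrFun (hv k) r

end Matrix

open Polynomial in
theorem eigenvector_eigenvalue_identity_charpoly_general {n : ℕ}
    (A : Matrix (Fin (n+1)) (Fin (n+1)) ℂ)
    (lam : Fin (n+1) → ℝ) (v : Fin (n+1) → Fin (n+1) → ℂ)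
    (horth : ∀ i k, dotProduct (star (v i)) (v k) = if i = k then 1 else 0)
    (heig : ∀ i, A.mulVec (v i) = (lam i : ℂ) • v i)
    (i j : Fin (n+1)) :
    (‖v i j‖ : ℂ) ^ 2 * (Polynomial.derivative A.charpoly).eval (lam i : ℂ)
      = (A.submatrix j.succAbove j.succAbove).charpoly.eval (lam i : ℂ) := by
  set U := (of v)ᵀ
  set d : Fin (n+1) → ℂ := fun k => (lam k : ℂ)
  have hUU : Uᴴ * U = 1 := conjTranspose_mul_transpose_of_of_orthonormal horth
  have hUU' : U * Uᴴ = 1 := mul_eq_one_comm.mp hUU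
  have hdecomp : A = U * diagonal d * Uᴴ := by
    rw [← mul_transpose_of_eq_of_mulVec_eq_smul heig, Matrix.mul_assoc, hUU', Matrix.mul_one]
  have hcharpoly : A.charpoly = ∏ m, (X - C (d m)) := by
    rw [hdecomp, charpoly_mul_comm, ← Matrix.mul_assoc, hUU, Matrix.one_mul, charpoly_diagonal]
  rw [hcharpoly, eval_derivative_prod_X_sub_C d (mem_univ i), eval_charpoly_submatrix_succAbove,
    hdecomp, scalar_sub_conj_of_mul_eq_one hUU', adjugate_conj_of_mul_eq_one hUU,
    scalar_apply, diagonal_sub, adjugate_diagonal_sub_self d i,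
    mul_diagonal_single_mul_conjTranspose_apply]
  simp only [U, transpose_apply, of_apply, Complex.star_def, ← Complex.mul_conj']
  ring

open Polynomial in
/-- The eigenvector-eigenvalue identity, characteristic polynomial form. -/
theorem eigenvector_eigenvalue_identity_charpoly {n : ℕ}
    (A : Matrix (Fin (n+1)) (Fin (n+1)) ℂ) (hA : A.IsHermitian)
    (lam : Fin (n+1) → ℝ) (v : Fin (n+1) → Fin (n+1) → ℂ)
    (horth : ∀ i k, dotProduct (star (v i)) (v k) = if i = k then 1 else 0)
    (heig : ∀ i, A.mulVec (v i) = (lam i : ℂ) • v i)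
    (i j : Fin (n+1)) :
    (‖v i j‖ : ℂ) ^ 2 * (Polynomial.derivative A.charpoly).eval (lam i : ℂ)
      = (A.submatrix j.succAbove j.succAbove).charpoly.eval (lam i : ℂ) :=
  eigenvector_eigenvalue_identity_charpoly_general A lam v horth heig i j
end

section
/- Let A be an n×n Hermitian matrix with eigenvalues λ₁(A),…,λₙ(A) and orthonormal eigenvectors v₁,…,vₙ, and let M_j be the j-th principal minor. For any complex λ not equal to any eigenvalue of A: det(λ·I_{n−1} − M_j) / det(λ·I_n − A) = Σ_{i=1}^n |v_{i,j}|² / (λ − λ_i(A)). -/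
/-!
The rows `v i` are orthonormal and square in number, so their rank-one projections sum to the
identity; the resolvent `(z • 1 - A)⁻¹` is then `∑ i, (z - λᵢ)⁻¹ vᵢ vᵢᴴ`. Reading off the `(j, j)`
entry and computing the same entry by Cramer's rule as a ratio of determinants gives the identity.
-/

open Matrix

namespace Matrix

variable {ι R : Type*} [Fintype ι] [DecidableEq ι]

theorem sum_vecMulVec_star_eq_one_of_orthonormal [CommRing R] [StarRing R] {v : ι → ι → R}
    (horth : ∀ i k, star (v i) ⬝ᵥ v k = if i = k then 1 else 0) :
    ∑ i, vecMulVec (v i) (star (v i)) = 1 := by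
  set V : Matrix ι ι R := (of v)ᵀ
  have hVhV : Vᴴ * V = 1 := by
    ext i k
    simpa [V, mul_apply, dotProduct, one_apply] using horth i k
  have hVVh : V * Vᴴ = 1 := mul_eq_one_comm.mp hVhV
  ext p q
  simpa [V, mul_apply, sum_apply, vecMulVec_apply] using congr_fun₂ hVVh p q

theorem inv_smul_one_sub_eq_sum_vecMulVec [Field R] [StarRing R] {A : Matrix ι ι R}
    {v : ι → ι → R} {μ : ι → R}
    (horth : ∀ i k, star (v i) ⬝ᵥ v k = if i = k then 1 else 0)
    (heig : ∀ i, A *ᵥ v i = μ i • v i) {z : R} (hz : ∀ i, z ≠ μ i) :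
    (z • 1 - A)⁻¹ = ∑ i, (z - μ i)⁻¹ • vecMulVec (v i) (star (v i)) := by
  refine inv_eq_right_inv ?_
  have hterm : ∀ i, (z • 1 - A) * ((z - μ i)⁻¹ • vecMulVec (v i) (star (v i)))
      = vecMulVec (v i) (star (v i)) := fun i => by
    rw [Matrix.mul_smul, mul_vecMulVec, sub_mulVec, smul_mulVec, one_mulVec, heig, ← sub_smul,
      smul_vecMulVec, smul_smul, inv_mul_cancel₀ (sub_ne_zero.mpr (hz i)), one_smul]
  rw [Finset.mul_sum, Finset.sum_congr rfl fun i _ => hterm i,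
    sum_vecMulVec_star_eq_one_of_orthonormal horth]

theorem inv_apply_self_fin_succ [Field R] {n : ℕ} (B : Matrix (Fin (n + 1)) (Fin (n + 1)) R)
    (j : Fin (n + 1)) : B⁻¹ j j = (B.submatrix j.succAbove j.succAbove).det / B.det := by
  rw [inv_def, smul_apply, adjugate_fin_succ_eq_det_submatrix, Ring.inverse_eq_inv',
    Even.neg_one_pow ⟨j, rfl⟩, one_mul, smul_eq_mul, inv_mul_eq_div]

end Matrix

theorem resolvent_diagonal_entry_general {n : ℕ}
    (A : Matrix (Fin (n+1)) (Fin (n+1)) ℂ)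
    (lam : Fin (n+1) → ℝ) (v : Fin (n+1) → Fin (n+1) → ℂ)
    (horth : ∀ i k, dotProduct (star (v i)) (v k) = if i = k then 1 else 0)
    (heig : ∀ i, A.mulVec (v i) = (lam i : ℂ) • v i)
    (z : ℂ) (hz : ∀ i, z ≠ (lam i : ℂ)) (j : Fin (n+1)) :
    (z • (1 : Matrix (Fin n) (Fin n) ℂ) - A.submatrix j.succAbove j.succAbove).det
        / (z • (1 : Matrix (Fin (n+1)) (Fin (n+1)) ℂ) - A).det
      = ∑ i, (‖v i j‖ : ℂ) ^ 2 / (z - (lam i : ℂ)) := by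
  have hminor : z • (1 : Matrix (Fin n) (Fin n) ℂ) - A.submatrix j.succAbove j.succAbove
      = (z • 1 - A).submatrix j.succAbove j.succAbove := by
    rw [← submatrix_one (α := ℂ) j.succAbove Fin.succAbove_right_injective]
    rfl
  rw [hminor, ← inv_apply_self_fin_succ, inv_smul_one_sub_eq_sum_vecMulVec horth heig hz]
  simp only [Matrix.sum_apply, Matrix.smul_apply, vecMulVec_apply, Pi.star_apply, RCLike.star_def,
    Complex.mul_conj', smul_eq_mul]
  exact Finset.sum_congr rfl fun i _ => inv_mul_eq_div _ _

/-- Resolvent identity: the `(j,j)` entry of `(λ I - A)⁻¹` via eigenvector components. -/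
theorem resolvent_diagonal_entry {n : ℕ}
    (A : Matrix (Fin (n+1)) (Fin (n+1)) ℂ) (hA : A.IsHermitian)
    (lam : Fin (n+1) → ℝ) (v : Fin (n+1) → Fin (n+1) → ℂ)
    (horth : ∀ i k, dotProduct (star (v i)) (v k) = if i = k then 1 else 0)
    (heig : ∀ i, A.mulVec (v i) = (lam i : ℂ) • v i)
    (z : ℂ) (hz : ∀ i, z ≠ (lam i : ℂ)) (j : Fin (n+1)) :
    (z • (1 : Matrix (Fin n) (Fin n) ℂ) - A.submatrix j.succAbove j.succAbove).det
        / (z • (1 : Matrix (Fin (n+1)) (Fin (n+1)) ℂ) - A).det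
      = ∑ i, (‖v i j‖ : ℂ) ^ 2 / (z - (lam i : ℂ)) :=
  resolvent_diagonal_entry_general A lam v horth heig z hz j
end

section
/- Let A be an n×n matrix over a commutative ring that is diagonalizable: A = Σ_{i=1}^n λ_i v_i w_i^T where the v_i are right eigenvectors, w_i are left eigenvectors, and w_i^T v_j = δ_{ij}. Then for each i: adj(λ_i·I_n − A) = (∏_{k≠i} (λ_i − λ_k)) · v_i w_i^T, and consequently det(λ_i·I_{n−1} − M_j) = (∏_{k≠i} (λ_i − λ_k)) · v_{i,j} w_{i,j} for each j. -/
/-!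
Biorthogonality says that the matrix `P` with columns `v k` has inverse the matrix `Q` with rows
`w k`, so that `λ_i • 1 - A = P * diagonal (λ_i - λ_k) * Q`. Since `adjugate P = det P • Q` and
`adjugate Q = det Q • P`, multiplicativity of the adjugate gives
`adjugate (λ_i • 1 - A) = P * adjugate (diagonal (λ_i - λ_k)) * Q`, and the diagonal entry
`λ_i - λ_i = 0` kills every entry of that diagonal adjugate except `∏_{k ≠ i} (λ_i - λ_k)` at
`(i, i)`. The minor identity is the `(j, j)` entry of the adjugate identity.
-/

open Finset

namespace Matrix

variable {R ι m n : Type*}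

theorem sum_smul_vecMulVec_eq_mul_diagonal_mul [CommSemiring R] [Fintype ι] [DecidableEq ι]
    (d : ι → R) (v : ι → m → R) (w : ι → n → R) :
    ∑ k, d k • vecMulVec (v k) (w k) = (of v)ᵀ * diagonal d * of w := by
  ext a b
  rw [mul_apply]
  simp only [sum_apply, smul_apply, vecMulVec_apply, mul_diagonal, transpose_apply, of_apply,
    smul_eq_mul]
  exact sum_congr rfl fun k _ => by ring

variable [CommRing R]

theorem submatrix_smul_one_sub [DecidableEq ι] [DecidableEq m] (c : R) (A : Matrix ι ι R)
    {f : m → ι} (hf : Function.Injective f) :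
    (c • 1 - A).submatrix f f = c • 1 - A.submatrix f f := by
  rw [← submatrix_one f hf]
  rfl

theorem det_submatrix_succAbove_self {k : ℕ} (M : Matrix (Fin (k + 1)) (Fin (k + 1)) R)
    (j : Fin (k + 1)) : det (M.submatrix j.succAbove j.succAbove) = adjugate M j j := by
  rw [adjugate_fin_succ_eq_det_submatrix, Even.neg_one_pow ⟨j, rfl⟩, one_mul]

variable [Fintype ι] [DecidableEq ι]

theorem adjugate_eq_det_smul_of_mul_eq_one_s8 {P Q : Matrix ι ι R} (h : P * Q = 1) :
    adjugate P = det P • Q := by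
  rw [← mul_one (adjugate P), ← h, ← Matrix.mul_assoc, adjugate_mul, smul_mul, one_mul]

theorem adjugate_mul_mul_of_mul_eq_one_s8 {P Q : Matrix ι ι R} (h : Q * P = 1) (D : Matrix ι ι R) :
    adjugate (P * D * Q) = P * adjugate D * Q := by
  rw [adjugate_mul_distrib, adjugate_mul_distrib, adjugate_eq_det_smul_of_mul_eq_one_s8 h,
    adjugate_eq_det_smul_of_mul_eq_one_s8 (mul_eq_one_comm.mp h)]
  simp only [Matrix.smul_mul, Matrix.mul_smul, smul_smul]
  rw [← det_mul, mul_eq_one_comm.mp h, det_one, one_smul, Matrix.mul_assoc]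

theorem adjugate_diagonal_of_apply_eq_zero (d : ι → R) {i : ι} (hi : d i = 0) :
    adjugate (diagonal d) = diagonal (Pi.single i (∏ k ∈ univ.erase i, d k)) := by
  rw [adjugate_diagonal]
  congr 1
  funext j
  rcases eq_or_ne j i with rfl | hji
  · rw [Pi.single_eq_same]
  · rw [Pi.single_eq_of_ne hji]
    exact prod_eq_zero (mem_erase.mpr ⟨hji.symm, mem_univ i⟩) hi

end Matrix

open Matrix

/-- Eigenvector-eigenvalue identity for diagonalizable matrices over a commutative ring. -/
theorem adjugate_and_minor_of_diagonalizable {R : Type*} [CommRing R] {n : ℕ}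
    (A : Matrix (Fin (n+1)) (Fin (n+1)) R)
    (lam : Fin (n+1) → R) (v w : Fin (n+1) → Fin (n+1) → R)
    (hdual : ∀ i k, dotProduct (w i) (v k) = if i = k then 1 else 0)
    (hdiag : A = ∑ i, lam i • Matrix.vecMulVec (v i) (w i))
    (i : Fin (n+1)) :
    (lam i • (1 : Matrix (Fin (n+1)) (Fin (n+1)) R) - A).adjugate
        = (∏ k ∈ Finset.univ.erase i, (lam i - lam k)) • Matrix.vecMulVec (v i) (w i)
      ∧ ∀ j : Fin (n+1),
        (lam i • (1 : Matrix (Fin n) (Fin n) R) - A.submatrix j.succAbove j.succAbove).det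
          = (∏ k ∈ Finset.univ.erase i, (lam i - lam k)) * (v i j * w i j) := by
  have hinv : of w * (of v)ᵀ = 1 := ext hdual
  have hsum : ∑ k, vecMulVec (v k) (w k) = 1 := by
    simpa only [one_smul, diagonal_one, Matrix.mul_one, mul_eq_one_comm.mp hinv] using
      sum_smul_vecMulVec_eq_mul_diagonal_mul (fun _ => (1 : R)) v w
  have hshift : lam i • 1 - A = (of v)ᵀ * diagonal (fun k => lam i - lam k) * of w := by
    simp only [← sum_smul_vecMulVec_eq_mul_diagonal_mul, hdiag, ← hsum, sub_smul, sum_sub_distrib,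
      smul_sum]
  have hadj : adjugate (lam i • 1 - A)
      = (∏ k ∈ univ.erase i, (lam i - lam k)) • vecMulVec (v i) (w i) := by
    rw [hshift, adjugate_mul_mul_of_mul_eq_one_s8 hinv,
      adjugate_diagonal_of_apply_eq_zero (fun k => lam i - lam k) (sub_self (lam i)),
      ← sum_smul_vecMulVec_eq_mul_diagonal_mul,
      Fintype.sum_eq_single i fun k hk => by rw [Pi.single_eq_of_ne hk, zero_smul],
      Pi.single_eq_same]
  refine ⟨hadj, fun j => ?_⟩
  rw [← submatrix_smul_one_sub _ _ Fin.succAbove_right_injective, det_submatrix_succAbove_self,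
    hadj, Matrix.smul_apply, vecMulVec_apply, smul_eq_mul]
end

section
/- Let A be an n×n matrix over a commutative ring with a right eigenvector v satisfying Av = 0. Then for all indices i, j, k: (adj A)_{k,i} · v_j = (adj A)_{j,i} · v_k. Dually, if w^T A = 0 then w_j · (adj A)_{i,k} = w_k · (adj A)_{i,j}. -/
private lemma adj_null_aux {R : Type*} [CommRing R] {n : ℕ}
    (A : Matrix (Fin n) (Fin n) R) (v : Fin n → R)
    (hv : A.mulVec v = 0) (i j k : Fin n) :
    A.adjugate k i * v j = A.adjugate j i * v k := by
  set C := A.updateRow i (Pi.single k 1) with hC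
  have hdet : C.det = A.adjugate k i := (Matrix.adjugate_apply A k i).symm
  have hCadj : C.adjugate j i = A.adjugate j i := by
    rw [Matrix.adjugate_apply, Matrix.adjugate_apply]
    congr 1
    ext r s
    rcases eq_or_ne r i with rfl | h
    · simp [Matrix.updateRow_self]
    · simp [hC, Matrix.updateRow_ne h]
  have hCv : C.mulVec v = Pi.single i (v k) := by
    ext r
    rcases eq_or_ne r i with rfl | h
    · simp [hC, Matrix.mulVec, Matrix.updateRow_self]
    · have h0 := congrFun hv r
      simp only [Matrix.mulVec, Pi.zero_apply] at h0 ⊢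
      rw [hC]
      simp [Matrix.updateRow_ne h, h0, Pi.single_eq_of_ne h]
  have h1 : C.det • v = C.adjugate.mulVec (Pi.single i (v k)) := by
    rw [← hCv, Matrix.mulVec_mulVec, Matrix.adjugate_mul, Matrix.smul_mulVec,
      Matrix.one_mulVec]
  have h2 := congrFun h1 j
  simp only [Pi.smul_apply, smul_eq_mul, Matrix.mulVec_single, Matrix.col_apply, op_smul_eq_mul] at h2
  rw [hdet, hCadj] at h2
  exact h2

/-- Key adjugate identities for null vectors, used in Grinberg's proof. -/
theorem adjugate_mul_nullvector_identities {R : Type*} [CommRing R] {n : ℕ}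
    (A : Matrix (Fin n) (Fin n) R) (v w : Fin n → R) :
    (A.mulVec v = 0 →
        ∀ i j k, A.adjugate k i * v j = A.adjugate j i * v k)
      ∧ (A.vecMul w = 0 →
        ∀ i j k, w j * A.adjugate i k = w k * A.adjugate i j) := by
  constructor
  · intro hv i j k
    exact adj_null_aux A v hv i j k
  · intro hw i j k
    have hv : Matrix.mulVec A.transpose w = 0 := by rw [Matrix.mulVec_transpose, hw]
    have h := adj_null_aux A.transpose w hv i j k
    rw [← Matrix.adjugate_transpose] at h
    simpa [Matrix.transpose_apply, mul_comm] using h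
end

section
/- Let T: ℂⁿ → ℂⁿ be a self-adjoint linear map annihilating a unit vector v. For each unit vector f ∈ ℂⁿ, let Δ_T(f) be the determinant of the quadratic form w ↦ ⟨Tw, w⟩ restricted to the orthogonal complement of f. Then |⟨v, f⟩|² · Δ_T(v) = Δ_T(f). -/
/-!
Extend `v` (resp. `f`) by the given orthonormal basis of its orthogonal complement to an
orthonormal basis of the whole space, and let `M` (resp. `M'`) be the matrix of `T` in it.
Then `Δ_T(v)` and `Δ_T(f)` are the corner cofactors of `M` and `M'`, and `M' = Pᴴ M P` for the
unitary change-of-basis matrix `P`, so that `adj M' = Pᴴ (adj M) P`. As `T v = 0` and `T` is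
self-adjoint, the first row and column of `M` vanish, so `adj M` is concentrated in the corner,
and the corner of `adj M'` is `|P₀₀|² Δ_T(v) = |⟨v, f⟩|² Δ_T(v)`.
-/

open Matrix

namespace Matrix

variable {n α : Type*} [Fintype n] [DecidableEq n]

theorem adjugate_inl_inl_eq_det_toBlocks₂₂ [CommRing α] (A : Matrix (Unit ⊕ n) (Unit ⊕ n) α) :
    adjugate A (Sum.inl ()) (Sum.inl ()) = A.toBlocks₂₂.det := by
  have h : A.updateRow (Sum.inl ()) (Pi.single (Sum.inl ()) 1) =
      fromBlocks 1 0 A.toBlocks₂₁ A.toBlocks₂₂ := by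
    ext (i | i) (j | j) <;> simp [updateRow_apply, toBlocks₂₁, toBlocks₂₂]
  rw [adjugate_apply, h, det_fromBlocks_zero₁₂, det_one, one_mul]

theorem adjugate_apply_eq_zero_of_row_eq_zero [CommRing α] {A : Matrix n n α} {i : n}
    (hA : ∀ j, A i j = 0) (j : n) {k : n} (hk : k ≠ i) : adjugate A j k = 0 := by
  rw [adjugate_apply]
  exact det_eq_zero_of_row_eq_zero i fun l => by rw [updateRow_ne hk.symm, hA]

theorem adjugate_eq_single_of_row_eq_zero_of_col_eq_zero [CommRing α] {A : Matrix n n α} {i : n}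
    (hrow : ∀ j, A i j = 0) (hcol : ∀ j, A j i = 0) :
    adjugate A = single i i (adjugate A i i) := by
  ext j k
  by_cases hk : k = i
  · by_cases hj : j = i
    · subst hj hk
      simp
    · rw [single_apply_of_row_ne (Ne.symm hj), ← transpose_apply (adjugate A), adjugate_transpose]
      exact adjugate_apply_eq_zero_of_row_eq_zero hcol k hj
  · rw [single_apply_of_col_ne _ _ (Ne.symm hk), adjugate_apply_eq_zero_of_row_eq_zero hrow j hk]

theorem mul_single_mul_apply [NonUnitalNonAssocSemiring α] {l m : Type*} [Fintype m]
    (X : Matrix l n α) (Y : Matrix n m α) (i j : n) (c : α) (a : l) (b : m) :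
    (X * single i j c * Y) a b = X a i * c * Y j b := by
  rw [mul_apply, Finset.sum_eq_single j]
  · rw [mul_single_apply_same]
  · intro k _ hk
    rw [mul_single_apply_of_ne (hbj := hk), zero_mul]
  · simp

theorem adjugate_of_mem_unitaryGroup [CommRing α] [StarRing α] {U : Matrix n n α}
    (hU : U ∈ unitaryGroup n α) : adjugate U = U.det • Uᴴ := by
  calc adjugate U = adjugate U * (U * star U) := by rw [Unitary.mul_star_self_of_mem hU, mul_one]
    _ = U.det • Uᴴ := by rw [← Matrix.mul_assoc, adjugate_mul, smul_mul, one_mul]; rfl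

theorem adjugate_conjTranspose_mul_mul [CommRing α] [StarRing α] {U : Matrix n n α}
    (hU : U ∈ unitaryGroup n α) (A : Matrix n n α) :
    adjugate (Uᴴ * A * U) = Uᴴ * adjugate A * U := by
  have hdet : Uᴴ.det * U.det = 1 := by
    rw [← det_mul, ← star_eq_conjTranspose, Unitary.star_mul_self_of_mem hU, det_one]
  rw [adjugate_mul_distrib, adjugate_mul_distrib, adjugate_of_mem_unitaryGroup hU,
    adjugate_of_mem_unitaryGroup (U := Uᴴ) (Unitary.star_mem hU), conjTranspose_conjTranspose]
  simp only [Matrix.smul_mul, Matrix.mul_smul, smul_smul, Matrix.mul_assoc]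
  rw [hdet, one_smul]

end Matrix

namespace OrthonormalBasis

variable {𝕜 E ι : Type*} [RCLike 𝕜] [NormedAddCommGroup E] [InnerProductSpace 𝕜 E] [Fintype ι]

theorem orthonormal_sumElim_span_singleton_orthogonal {v : E} (hv : ‖v‖ = 1)
    (b : OrthonormalBasis ι 𝕜 (𝕜 ∙ v)ᗮ) :
    Orthonormal 𝕜 (Sum.elim (fun _ : Unit => v) fun i => (b i : E)) := by
  classical
  have hvb : ∀ i, inner 𝕜 v (b i : E) = 0 := fun i =>
    (b i).2 v (Submodule.mem_span_singleton_self v)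
  rw [orthonormal_iff_ite]
  rintro (_ | i) (_ | j)
  · simp [inner_self_eq_norm_sq_to_K, hv]
  · simp [hvb]
  · simp [← inner_conj_symm (b i : E), hvb]
  · simpa [← Submodule.coe_inner] using orthonormal_iff_ite.mp b.orthonormal i j

theorem span_sumElim_span_singleton_orthogonal {v : E} (b : OrthonormalBasis ι 𝕜 (𝕜 ∙ v)ᗮ) :
    Submodule.span 𝕜 (Set.range (Sum.elim (fun _ : Unit => v) fun i => (b i : E))) = ⊤ := by
  rw [Set.Sum.elim_range, Submodule.span_union, Set.range_const, Set.range_comp',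
    ← Submodule.coe_subtype, Submodule.span_image, ← b.coe_toBasis, b.toBasis.span_eq,
    Submodule.map_top, Submodule.range_subtype]
  exact Submodule.sup_orthogonal_of_hasOrthogonalProjection

noncomputable def extendOfSpanSingletonOrthogonal {v : E} (hv : ‖v‖ = 1)
    (b : OrthonormalBasis ι 𝕜 (𝕜 ∙ v)ᗮ) : OrthonormalBasis (Unit ⊕ ι) 𝕜 E :=
  .mk (orthonormal_sumElim_span_singleton_orthogonal hv b)
    (span_sumElim_span_singleton_orthogonal b).ge

@[simp]
theorem coe_extendOfSpanSingletonOrthogonal {v : E} (hv : ‖v‖ = 1)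
    (b : OrthonormalBasis ι 𝕜 (𝕜 ∙ v)ᗮ) :
    ⇑(extendOfSpanSingletonOrthogonal hv b) = Sum.elim (fun _ : Unit => v) fun i => (b i : E) :=
  OrthonormalBasis.coe_mk _ _

theorem toBasis_toMatrix_apply (a b : OrthonormalBasis ι 𝕜 E) (i j : ι) :
    a.toBasis.toMatrix b i j = inner 𝕜 (a i) (b j) := by
  rw [Module.Basis.toMatrix_apply, a.coe_toBasis_repr_apply, a.repr_apply_apply]

theorem toBasis_toMatrix_symm (a b : OrthonormalBasis ι 𝕜 E) :
    b.toBasis.toMatrix a = (a.toBasis.toMatrix b)ᴴ := by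
  ext i j
  rw [conjTranspose_apply, toBasis_toMatrix_apply, toBasis_toMatrix_apply, RCLike.star_def,
    inner_conj_symm]

end OrthonormalBasis

namespace LinearMap

variable {𝕜 E ι : Type*} [RCLike 𝕜] [NormedAddCommGroup E] [InnerProductSpace 𝕜 E]
  [FiniteDimensional 𝕜 E] [Fintype ι] [DecidableEq ι]

open OrthonormalBasis

theorem toMatrixOrthonormal_eq_conjTranspose_mul_mul (a b : OrthonormalBasis ι 𝕜 E)
    (T : E →ₗ[𝕜] E) :
    toMatrixOrthonormal b T =
      (a.toBasis.toMatrix b)ᴴ * toMatrixOrthonormal a T * a.toBasis.toMatrix b := by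
  rw [← a.toBasis_toMatrix_symm b]
  exact (basis_toMatrix_mul_linearMap_toMatrix_mul_basis_toMatrix (b := b.toBasis)
    (c := b.toBasis) (b' := a.toBasis) (c' := a.toBasis) T).symm

variable {T : E →ₗ[𝕜] E} {v : E}

theorem IsSymmetric.det_inner_orthogonal_eq_adjugate_toMatrixOrthonormal (hT : T.IsSymmetric)
    (hv : ‖v‖ = 1) (b : OrthonormalBasis ι 𝕜 (𝕜 ∙ v)ᗮ) :
    (of fun p q => inner 𝕜 (T (b p)) (b q : E)).det =
      adjugate (toMatrixOrthonormal (extendOfSpanSingletonOrthogonal hv b) T)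
        (Sum.inl ()) (Sum.inl ()) := by
  rw [adjugate_inl_inl_eq_det_toBlocks₂₂]
  congr 1
  ext p q
  rw [of_apply, toBlocks₂₂, of_apply, toMatrixOrthonormal_apply_apply,
    coe_extendOfSpanSingletonOrthogonal, Sum.elim_inr, Sum.elim_inr, hT]

theorem IsSymmetric.adjugate_toMatrixOrthonormal_eq_single (hT : T.IsSymmetric) (hTv : T v = 0)
    (hv : ‖v‖ = 1) (b : OrthonormalBasis ι 𝕜 (𝕜 ∙ v)ᗮ) :
    adjugate (toMatrixOrthonormal (extendOfSpanSingletonOrthogonal hv b) T) =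
      Matrix.single (Sum.inl ()) (Sum.inl ())
        (adjugate (toMatrixOrthonormal (extendOfSpanSingletonOrthogonal hv b) T)
          (Sum.inl ()) (Sum.inl ())) :=
  adjugate_eq_single_of_row_eq_zero_of_col_eq_zero
    (fun j => by rw [toMatrixOrthonormal_apply_apply, coe_extendOfSpanSingletonOrthogonal,
      Sum.elim_inl, ← hT, hTv, inner_zero_left])
    (fun j => by rw [toMatrixOrthonormal_apply_apply, coe_extendOfSpanSingletonOrthogonal,
      Sum.elim_inl, hTv, inner_zero_right])

end LinearMap

open LinearMap OrthonormalBasis in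
/-- Coordinate-free eigenvector-eigenvalue identity (Berndtsson). -/
theorem coordinate_free_eigenvector_eigenvalue {n : ℕ}
    (T : EuclideanSpace ℂ (Fin (n+1)) →ₗ[ℂ] EuclideanSpace ℂ (Fin (n+1)))
    (hT : T.IsSymmetric)
    (v : EuclideanSpace ℂ (Fin (n+1))) (hv : ‖v‖ = 1) (hTv : T v = 0)
    (f : EuclideanSpace ℂ (Fin (n+1))) (hf : ‖f‖ = 1)
    (bv : OrthonormalBasis (Fin n) ℂ ((ℂ ∙ v)ᗮ : Submodule ℂ (EuclideanSpace ℂ (Fin (n+1)))))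
    (bf : OrthonormalBasis (Fin n) ℂ ((ℂ ∙ f)ᗮ : Submodule ℂ (EuclideanSpace ℂ (Fin (n+1))))) :
    (‖(inner ℂ v f : ℂ)‖ : ℂ) ^ 2 *
        (Matrix.of fun p q : Fin n => (inner ℂ (T ((bv p : EuclideanSpace ℂ (Fin (n+1)))))
          ((bv q : EuclideanSpace ℂ (Fin (n+1)))) : ℂ)).det
      = (Matrix.of fun p q : Fin n => (inner ℂ (T ((bf p : EuclideanSpace ℂ (Fin (n+1)))))
          ((bf q : EuclideanSpace ℂ (Fin (n+1)))) : ℂ)).det := by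
  set a := extendOfSpanSingletonOrthogonal hv bv
  set b := extendOfSpanSingletonOrthogonal hf bf
  have hab : a.toBasis.toMatrix b (Sum.inl ()) (Sum.inl ()) = inner ℂ v f := by
    rw [a.toBasis_toMatrix_apply, coe_extendOfSpanSingletonOrthogonal,
      coe_extendOfSpanSingletonOrthogonal, Sum.elim_inl, Sum.elim_inl]
  rw [hT.det_inner_orthogonal_eq_adjugate_toMatrixOrthonormal hv,
    hT.det_inner_orthogonal_eq_adjugate_toMatrixOrthonormal hf,
    toMatrixOrthonormal_eq_conjTranspose_mul_mul a b,
    adjugate_conjTranspose_mul_mul (a.toMatrix_orthonormalBasis_mem_unitary b),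
    hT.adjugate_toMatrixOrthonormal_eq_single hTv hv, mul_single_mul_apply, conjTranspose_apply,
    hab, single_apply_same, mul_right_comm, RCLike.star_def, RCLike.conj_mul]
  rfl
end

section
/- Let A be an n×n Hermitian matrix with a zero eigenvalue, with corresponding unit eigenvector v (Av = 0). Then for any n×(n−1) matrix B: det(B* A B) = (−1)^{n−1} p_A'(0) · |det(B | v)|², where (B | v) is the n×n matrix whose first n−1 columns are B and last column is v. -/
/-!
Put `M = (B | v)`. The pencil `Mᴴ (A - X) M = MᴴAM - X • MᴴM` has determinant
`(-1)^(n+1) |det M|² p_A(X)`. On the other hand `Av = 0 = vᴴA` makes the last row and column of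
`MᴴAM` vanish, its leading block is `BᴴAB`, and `(MᴴM)_{last,last} = vᴴv = 1`; expanding along
the last row shows that the linear coefficient of the same determinant is `-det (BᴴAB)`.
-/

open Polynomial Matrix

section

variable {R : Type*} [CommRing R]

theorem Matrix.det_eq_mul_det_submatrix_castSucc_of_col_last {n : ℕ}
    (F : Matrix (Fin (n + 1)) (Fin (n + 1)) R)
    (hF : ∀ i ≠ Fin.last n, F i (Fin.last n) = 0) :
    F.det = F (Fin.last n) (Fin.last n) * (F.submatrix Fin.castSucc Fin.castSucc).det := by
  rw [det_succ_column F (Fin.last n), Finset.sum_eq_single (Fin.last n)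
    (fun i _ hi => by rw [hF i hi, mul_zero, zero_mul]) (by simp)]
  simp [← two_mul, pow_mul]

theorem Matrix.det_mul_mul_sub_X_smul_mul {m : Type*} [Fintype m] [DecidableEq m]
    (P A Q : Matrix m m R) :
    ((P * A * Q).map C - (X : R[X]) • (P * Q).map C).det
      = C ((-1) ^ Fintype.card m * P.det * Q.det) * A.charpoly := by
  have hneg : -charmatrix A = A.map C - (X : R[X]) • 1 := by
    rw [charmatrix, neg_sub, smul_one_eq_diagonal, scalar_apply]
    rfl
  have hfactor : (P * A * Q).map C - (X : R[X]) • (P * Q).map C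
      = P.map C * -charmatrix A * Q.map C := by
    rw [hneg, Matrix.map_mul, Matrix.map_mul, Matrix.map_mul, mul_sub, sub_mul, mul_smul_comm,
      mul_one, smul_mul_assoc]
  rw [hfactor, det_mul, det_mul, det_neg, show (P.map C).det = C P.det from (C.map_det P).symm,
    show (Q.map C).det = C Q.det from (C.map_det Q).symm, charpoly]
  simp only [C_mul, C_pow, C_neg, C_1]
  ring

theorem Matrix.derivative_det_sub_X_smul_eval_zero {n : ℕ}
    (N S : Matrix (Fin (n + 1)) (Fin (n + 1)) R)
    (hrow : ∀ j, N (Fin.last n) j = 0) (hcol : ∀ i, N i (Fin.last n) = 0) :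
    (derivative (N.map C - (X : R[X]) • S.map C).det).eval 0
      = -(S (Fin.last n) (Fin.last n) * (N.submatrix Fin.castSucc Fin.castSucc).det) := by
  set D := N.map C - (X : R[X]) • S.map C
  set E := D.updateRow (Fin.last n) fun j => C (S (Fin.last n) j)
  have hD : D.det = -X * E.det := by
    have hlast : D (Fin.last n) = (-X : R[X]) • fun j => C (S (Fin.last n) j) := by
      funext j
      simp [D, hrow j]
    rw [← det_updateRow_smul, ← hlast, updateRow_eq_self]
  have hE : (evalRingHom 0).mapMatrix E = N.updateRow (Fin.last n) (S (Fin.last n)) := by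
    ext i j
    by_cases hi : i = Fin.last n
    · subst hi; simp [E]
    · simp [E, D, hi]
  have hE0 : E.det.eval 0
      = S (Fin.last n) (Fin.last n) * (N.submatrix Fin.castSucc Fin.castSucc).det := by
    rw [← coe_evalRingHom, RingHom.map_det, hE,
      det_eq_mul_det_submatrix_castSucc_of_col_last _ (fun i hi => by simp [hi, hcol])]
    congr 2
    · simp
    · ext k l; simp [(Fin.castSucc_lt_last k).ne]
  rw [hD, ← hE0]
  simp [derivative_mul]

end

/-- Cauchy-Binet type formula. -/
theorem cauchy_binet_type_formula {n : ℕ}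
    (A : Matrix (Fin (n+1)) (Fin (n+1)) ℂ) (hA : A.IsHermitian)
    (v : Fin (n+1) → ℂ) (hv : A.mulVec v = 0)
    (hvu : dotProduct (star v) v = 1)
    (B : Matrix (Fin (n+1)) (Fin n) ℂ) :
    (B.conjTranspose * A * B).det
      = (-1) ^ n * (Polynomial.derivative A.charpoly).eval 0 *
          (‖(Matrix.of fun i : Fin (n+1) => Fin.snoc (B i) (v i)).det‖ : ℂ) ^ 2 := by
  set M := Matrix.of fun i : Fin (n+1) => Fin.snoc (B i) (v i)
  have hN : (Mᴴ * A * M).IsHermitian := isHermitian_conjTranspose_mul_mul M hA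
  have hcol : ∀ i, (Mᴴ * A * M) i (Fin.last n) = 0 := fun i => by
    have hlast : (Mᴴ * A * M) i (Fin.last n) = ((Mᴴ * A) *ᵥ v) i := by
      simp [M, mul_apply, mulVec, dotProduct]
    rw [hlast, ← mulVec_mulVec, hv, mulVec_zero, Pi.zero_apply]
  have hrow : ∀ j, (Mᴴ * A * M) (Fin.last n) j = 0 := fun j => by
    rw [← hN.apply, hcol, star_zero]
  have hblock : (Mᴴ * A * M).submatrix Fin.castSucc Fin.castSucc = Bᴴ * A * B := by
    ext k l; simp [M, mul_apply]
  have hS : (Mᴴ * M) (Fin.last n) (Fin.last n) = 1 := by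
    simpa [M, mul_apply, dotProduct] using hvu
  have key := derivative_det_sub_X_smul_eval_zero _ (Mᴴ * M) hrow hcol
  rw [det_mul_mul_sub_X_smul_mul, derivative_C_mul, eval_mul, eval_C, hS, hblock, one_mul,
    det_conjTranspose, Fintype.card_fin] at key
  have hnorm : star M.det * M.det = (‖M.det‖ : ℂ) ^ 2 := RCLike.conj_mul M.det
  linear_combination key + (-1) ^ n * (derivative A.charpoly).eval 0 * hnorm
end

section
/- Let A be an n×n Hermitian matrix written in block form A = [[a₁₁, X*],[X, M₁]] with X ∈ ℂ^{n−1} and M₁ the lower-right (n−1)×(n−1) block. Suppose λ_i(A) is an eigenvalue of A with unit eigenvector v_i, and λ_i(A) is not an eigenvalue of M₁. Then |v_{i,1}|² = 1 / (1 + X* (λ_i(A)·I_{n−1} − M₁)^{−2} X). -/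
/-!
Write `A = [[a, X*], [X, M]]` and `v = (v₀, w)`. The last `n` rows of `A v = λ v` say
`(λ - M) w = v₀ X`, so `w = v₀ (λ - M)⁻¹ X`. Since `λ - M` is Hermitian,
`‖w‖² = |v₀|² X* (λ - M)⁻² X`, and `1 = |v₀|² + ‖w‖²` gives `|v₀|² (1 + X* (λ - M)⁻² X) = 1`.
-/

open Matrix

theorem Matrix.IsHermitian.star_mulVec_dotProduct_mulVec {α m : Type*} [CommRing α] [StarRing α]
    [Fintype m] {H : Matrix m m α} (hH : H.IsHermitian) (x : m → α) :
    star (H *ᵥ x) ⬝ᵥ H *ᵥ x = star x ⬝ᵥ (H * H) *ᵥ x := by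
  rw [star_mulVec, hH.eq, ← dotProduct_mulVec, mulVec_mulVec]

theorem dotProduct_eq_mul_add_tail {α : Type*} [Mul α] [AddCommMonoid α] {n : ℕ}
    (u w : Fin (n + 1) → α) : u ⬝ᵥ w = u 0 * w 0 + Fin.tail u ⬝ᵥ Fin.tail w :=
  Fin.sum_univ_succ _

theorem Matrix.mulVec_apply_succ {α : Type*} [NonUnitalNonAssocSemiring α] {n : ℕ}
    (A : Matrix (Fin (n + 1)) (Fin (n + 1)) α) (v : Fin (n + 1) → α) (k : Fin n) :
    (A *ᵥ v) k.succ = A k.succ 0 * v 0 + (A.submatrix Fin.succ Fin.succ *ᵥ Fin.tail v) k :=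
  Fin.sum_univ_succ _

theorem Matrix.smul_one_sub_submatrix_succ_mulVec_tail {α : Type*} [CommRing α] {n : ℕ}
    {A : Matrix (Fin (n + 1)) (Fin (n + 1)) α} {v : Fin (n + 1) → α} {c : α}
    (h : A *ᵥ v = c • v) :
    (c • (1 : Matrix (Fin n) (Fin n) α) - A.submatrix Fin.succ Fin.succ) *ᵥ Fin.tail v
      = v 0 • fun k => A k.succ 0 := by
  ext k
  have hk : A k.succ 0 * v 0 + (A.submatrix Fin.succ Fin.succ *ᵥ Fin.tail v) k = c * v k.succ := by
    rw [← mulVec_apply_succ, h, Pi.smul_apply, smul_eq_mul]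
  rw [sub_mulVec, smul_mulVec, one_mulVec]
  simp only [Pi.sub_apply, Pi.smul_apply, smul_eq_mul, Fin.tail]
  linear_combination -hk

/-- Alternate expression for the first component of an eigenvector (Erdős-Schlein-Yau). -/
theorem eigenvector_component_alt_formula {n : ℕ}
    (A : Matrix (Fin (n+1)) (Fin (n+1)) ℂ) (hA : A.IsHermitian)
    (lam : ℝ) (v : Fin (n+1) → ℂ)
    (heig : A.mulVec v = (lam : ℂ) • v)
    (hvu : dotProduct (star v) v = 1)
    (hM : IsUnit ((lam : ℂ) • (1 : Matrix (Fin n) (Fin n) ℂ)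
        - A.submatrix Fin.succ Fin.succ).det) :
    (‖v 0‖ : ℂ) ^ 2
      = 1 / (1 + dotProduct (star fun k : Fin n => A k.succ 0)
          ((((lam : ℂ) • (1 : Matrix (Fin n) (Fin n) ℂ) - A.submatrix Fin.succ Fin.succ)⁻¹ *
            ((lam : ℂ) • (1 : Matrix (Fin n) (Fin n) ℂ) - A.submatrix Fin.succ Fin.succ)⁻¹).mulVec
            (fun k : Fin n => A k.succ 0))) := by
  set B := (lam : ℂ) • (1 : Matrix (Fin n) (Fin n) ℂ) - A.submatrix Fin.succ Fin.succ
  set X : Fin n → ℂ := fun k => A k.succ 0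
  have hB : B.IsHermitian :=
    (isHermitian_one.smul (Complex.conj_ofReal lam)).sub (hA.submatrix Fin.succ)
  have htail : Fin.tail v = v 0 • B⁻¹ *ᵥ X := by
    rw [← mulVec_smul, ← smul_one_sub_submatrix_succ_mulVec_tail heig, mulVec_mulVec,
      nonsing_inv_mul B hM, one_mulVec]
  have hnorm : (‖v 0‖ : ℂ) ^ 2 * (1 + star X ⬝ᵥ (B⁻¹ * B⁻¹) *ᵥ X) = 1 :=
    calc _ = star (v 0) * v 0 + star (Fin.tail v) ⬝ᵥ Fin.tail v := by
          rw [htail, star_smul, smul_dotProduct, dotProduct_smul,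
            hB.inv.star_mulVec_dotProduct_mulVec, ← Complex.conj_mul', smul_eq_mul, smul_eq_mul,
            Complex.star_def]
          ring
      _ = star v ⬝ᵥ v := (dotProduct_eq_mul_add_tail (star v) v).symm
      _ = 1 := hvu
  rw [eq_div_iff (left_ne_zero_of_mul_eq_one (by rwa [mul_comm] at hnorm)), hnorm]
end

section
/- Let A be an n×n Hermitian matrix, λ* an eigenvalue of A of multiplicity m ≥ 1, with orthonormal eigenbasis v₁,…,vₙ, and let M_j be the j-th principal minor. Then Σ_{i : λ_i(A) = λ*} |v_{i,j}|² = lim_{λ → λ*} p_{M_j}(λ)(λ − λ*) / p_A(λ), i.e., the total squared eigenvector mass at coordinate j for the eigenvalue λ* equals the residue of p_{M_j}/p_A at λ*. -/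
/-!
By Cramer's rule `p_{M_j}(z) / p_A(z)` is the diagonal entry `((z - A)⁻¹)_{jj}` of the resolvent,
and expanding the resolvent in the orthonormal eigenbasis gives
`((z - A)⁻¹)_{jj} = ∑ᵢ |v_{i,j}|² / (z - λᵢ)`. Multiplying by `z - λ*` kills every term with
`λᵢ ≠ λ*` in the limit and leaves `|v_{i,j}|²` for each `λᵢ = λ*`.
-/

open Matrix Filter Topology

namespace Matrix

theorem inv_apply_self_eq_det_submatrix_div {K : Type*} [Field K] {n : ℕ}
    (B : Matrix (Fin (n + 1)) (Fin (n + 1)) K) (j : Fin (n + 1)) :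
    B⁻¹ j j = (B.submatrix j.succAbove j.succAbove).det / B.det := by
  rw [inv_def, Ring.inverse_eq_inv', smul_apply, adjugate_fin_succ_eq_det_submatrix,
    ← two_mul, pow_mul, neg_one_sq, one_pow, one_mul, smul_eq_mul, inv_mul_eq_div]

theorem eval_charpoly_submatrix_div_eval_charpoly {K : Type*} [Field K] {n : ℕ}
    (A : Matrix (Fin (n + 1)) (Fin (n + 1)) K) (j : Fin (n + 1)) (z : K) :
    (A.submatrix j.succAbove j.succAbove).charpoly.eval z / A.charpoly.eval z
      = (scalar (Fin (n + 1)) z - A)⁻¹ j j := by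
  rw [inv_apply_self_eq_det_submatrix_div, eval_charpoly, eval_charpoly, scalar_apply,
    scalar_apply, ← Function.comp_def (fun _ => z) j.succAbove,
    ← submatrix_diagonal _ _ j.succAbove_right_injective]
  rfl

section Spectral

variable {ι 𝕜 : Type*} [Fintype ι] [DecidableEq ι] [RCLike 𝕜] {v : ι → ι → 𝕜}

theorem conjTranspose_mul_self_of_orthonormal
    (horth : ∀ i k, star (v i) ⬝ᵥ v k = if i = k then 1 else 0) :
    (of v)ᵀᴴ * (of v)ᵀ = 1 := by
  ext i k
  simpa [mul_apply, dotProduct, one_apply] using horth i k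

theorem mul_transpose_of_eq_transpose_of_mul_diagonal {A : Matrix ι ι 𝕜} {μ : ι → 𝕜}
    (heig : ∀ i, A *ᵥ v i = μ i • v i) :
    A * (of v)ᵀ = (of v)ᵀ * diagonal μ := by
  ext k i
  rw [mul_diagonal]
  simpa [mul_apply, mulVec, dotProduct, mul_comm] using congrFun (heig i) k

theorem inv_scalar_sub_of_orthonormal_eigenvectors {A : Matrix ι ι 𝕜} {μ : ι → 𝕜}
    (horth : ∀ i k, star (v i) ⬝ᵥ v k = if i = k then 1 else 0)
    (heig : ∀ i, A *ᵥ v i = μ i • v i) {z : 𝕜} (hz : ∀ i, z ≠ μ i) :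
    (scalar ι z - A)⁻¹ = (of v)ᵀ * diagonal (fun i => (z - μ i)⁻¹) * (of v)ᵀᴴ := by
  have hUU : (of v)ᵀ * (of v)ᵀᴴ = 1 :=
    mul_eq_one_comm.mp (conjTranspose_mul_self_of_orthonormal horth)
  have hshift : (scalar ι z - A) * (of v)ᵀ = (of v)ᵀ * diagonal (fun i => z - μ i) := by
    rw [sub_mul, mul_transpose_of_eq_transpose_of_mul_diagonal heig,
      (scalar_commute z (Commute.all z) _).eq, scalar_apply, ← diagonal_sub, mul_sub]
  refine inv_eq_right_inv ?_
  rw [← mul_assoc, ← mul_assoc, hshift, mul_assoc (of v)ᵀ, diagonal_mul_diagonal]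
  simp_rw [mul_inv_cancel₀ (sub_ne_zero.mpr (hz _))]
  rw [diagonal_one, mul_one, hUU]

theorem inv_scalar_sub_apply_self_of_orthonormal_eigenvectors {A : Matrix ι ι 𝕜} {μ : ι → 𝕜}
    (horth : ∀ i k, star (v i) ⬝ᵥ v k = if i = k then 1 else 0)
    (heig : ∀ i, A *ᵥ v i = μ i • v i) {z : 𝕜} (hz : ∀ i, z ≠ μ i) (j : ι) :
    (scalar ι z - A)⁻¹ j j = ∑ i, ((‖v i j‖ ^ 2 : ℝ) : 𝕜) / (z - μ i) := by
  rw [inv_scalar_sub_of_orthonormal_eigenvectors horth heig hz, mul_apply]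
  refine Finset.sum_congr rfl fun i _ => ?_
  simp [mul_diagonal, ← RCLike.mul_conj, div_eq_mul_inv]
  ring

end Spectral

end Matrix

theorem tendsto_sum_div_sub_mul_sub {ι 𝕜 : Type*} [Fintype ι] [NormedField 𝕜] [DecidableEq 𝕜]
    (c b : ι → 𝕜) (a : 𝕜) :
    Tendsto (fun z => (∑ i, c i / (z - b i)) * (z - a)) (𝓝[≠] a)
      (𝓝 (∑ i with b i = a, c i)) := by
  simp_rw [Finset.sum_filter, Finset.sum_mul]
  refine tendsto_finsetSum _ fun i _ => ?_
  split_ifs with h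
  · subst h
    refine tendsto_const_nhds.congr' ?_
    filter_upwards [self_mem_nhdsWithin] with z hz
    exact (div_mul_cancel₀ _ (sub_ne_zero.mpr hz)).symm
  · have hcont : Tendsto (fun z => c i / (z - b i) * (z - a)) (𝓝 a)
        (𝓝 (c i / (a - b i) * (a - a))) :=
      (tendsto_const_nhds.div (tendsto_id.sub tendsto_const_nhds)
        (sub_ne_zero.mpr (Ne.symm h))).mul (tendsto_id.sub tendsto_const_nhds)
    rw [sub_self, mul_zero] at hcont
    exact hcont.mono_left nhdsWithin_le_nhds

open Topology Filter in
theorem eigenvector_mass_eq_residue_general {n : ℕ}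
    (A : Matrix (Fin (n+1)) (Fin (n+1)) ℂ)
    (lam : Fin (n+1) → ℝ) (v : Fin (n+1) → Fin (n+1) → ℂ)
    (horth : ∀ i k, dotProduct (star (v i)) (v k) = if i = k then 1 else 0)
    (heig : ∀ i, A.mulVec (v i) = (lam i : ℂ) • v i)
    (lamStar : ℝ) (j : Fin (n+1)) :
    Filter.Tendsto
      (fun z : ℂ => (A.submatrix j.succAbove j.succAbove).charpoly.eval z *
        (z - (lamStar : ℂ)) / A.charpoly.eval z)
      (𝓝[≠] (lamStar : ℂ))
      (𝓝 ((∑ i ∈ Finset.univ.filter fun i => lam i = lamStar, ‖v i j‖ ^ 2 : ℝ) : ℂ)) := by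
  have hresolvent : ∀ᶠ z in 𝓝[≠] (lamStar : ℂ),
      (∑ i, ((‖v i j‖ ^ 2 : ℝ) : ℂ) / (z - lam i)) * (z - lamStar) =
        (A.submatrix j.succAbove j.succAbove).charpoly.eval z * (z - lamStar) /
          A.charpoly.eval z := by
    filter_upwards
      [nhdsNE_le_cofinite _ (Set.finite_range fun i => (lam i : ℂ)).compl_mem_cofinite] with z hz
    have hz : ∀ i, z ≠ lam i := fun i h => hz ⟨i, h.symm⟩
    rw [mul_div_right_comm, eval_charpoly_submatrix_div_eval_charpoly,
      inv_scalar_sub_apply_self_of_orthonormal_eigenvectors horth heig hz]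
    -- the `RCLike` and `Complex` coercions of a real number agree definitionally
    rfl
  convert (tendsto_sum_div_sub_mul_sub _ (fun i => (lam i : ℂ)) _).congr' hresolvent using 2
  push_cast
  simp only [Complex.ofReal_inj]

open Topology Filter in
/-- The total squared eigenvector mass at a coordinate equals the residue of
`p_{M_j}/p_A` at the eigenvalue. -/
theorem eigenvector_mass_eq_residue {n : ℕ}
    (A : Matrix (Fin (n+1)) (Fin (n+1)) ℂ) (hA : A.IsHermitian)
    (lam : Fin (n+1) → ℝ) (v : Fin (n+1) → Fin (n+1) → ℂ)
    (horth : ∀ i k, dotProduct (star (v i)) (v k) = if i = k then 1 else 0)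
    (heig : ∀ i, A.mulVec (v i) = (lam i : ℂ) • v i)
    (lamStar : ℝ) (hstar : ∃ i, lam i = lamStar) (j : Fin (n+1)) :
    Filter.Tendsto
      (fun z : ℂ => (A.submatrix j.succAbove j.succAbove).charpoly.eval z *
        (z - (lamStar : ℂ)) / A.charpoly.eval z)
      (𝓝[≠] (lamStar : ℂ))
      (𝓝 ((∑ i ∈ Finset.univ.filter fun i => lam i = lamStar, ‖v i j‖ ^ 2 : ℝ) : ℂ)) :=
  eigenvector_mass_eq_residue_general A lam v horth heig lamStar j
end
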